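/- Let a > 0, ε > 0, and c, σ₁, σ₂, σ₃, σ₄ ∈ ℝ. Define φ(y) = (σ₃/(2a²) + 3σ₄/(4a³) − c)·exp(−a·y/ε) + ((σ₁/a + σ₂/a²)·(y/ε) + (σ₂/(2a))·(y/ε)²)·exp(−a·y/ε) − ((σ₃/(2a²) + 3σ₄/(4a³)) + (σ₄/(2a²))·(y/ε))·exp(−2·a·y/ε). Then: (i) for every y ∈ ℝ, −ε·φ''(y) − a·φ'(y) = (1/ε)·(σ₁·exp(−a·y/ε) + σ₂·(y/ε)·exp(−a·y/ε) + σ₃·exp(−2·a·y/ε) + σ₄·(y/ε)·exp(−2·a·y/ε)); (ii) φ(0) = −c; (iii) φ(y) → 0 as y → ∞. -/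

import Mathlib

/-!
In the fast variable `t = y / ε` the profile is `F(t) = φ(ε t)`, a combination of quasi-polynomials
`(p₀ + p₁ t + p₂ t²) e^{r t}` with `r = -a` and `r = -2a`. This family is closed under
differentiation, with explicit coefficients, so `-F'' - a F'` is computed exactly and the claimed
equation is a polynomial identity in the coefficients; rescaling back multiplies `d/dy` by `1/ε`.
Since `r < 0`, each quasi-polynomial vanishes at `+∞`.
-/

open Real Filter Topology

noncomputable section

def quadExp (p₀ p₁ p₂ r t : ℝ) : ℝ := (p₀ + p₁ * t + p₂ * t ^ 2) * exp (r * t)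

theorem hasDerivAt_quadExp (p₀ p₁ p₂ r t : ℝ) :
    HasDerivAt (quadExp p₀ p₁ p₂ r) (quadExp (p₁ + r * p₀) (2 * p₂ + r * p₁) (r * p₂) r t) t := by
  have hP : HasDerivAt (fun t => p₀ + p₁ * t + p₂ * t ^ 2) (p₁ + 2 * p₂ * t) t :=
    ((((hasDerivAt_id t).const_mul p₁).const_add p₀).add
      ((hasDerivAt_pow 2 t).const_mul p₂)).congr_deriv
      (by simp only [mul_one, Nat.cast_ofNat, Nat.add_one_sub_one, pow_one]; ring)
  have hE : HasDerivAt (fun t => exp (r * t)) (exp (r * t) * r) t := by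
    simpa using ((hasDerivAt_id t).const_mul r).exp
  exact (hP.mul hE).congr_deriv (by unfold quadExp; ring)

theorem tendsto_pow_mul_exp_mul_atTop_nhds_zero (n : ℕ) {r : ℝ} (hr : r < 0) :
    Tendsto (fun t => t ^ n * exp (r * t)) atTop (𝓝 0) := by
  simpa [Real.rpow_natCast] using tendsto_rpow_mul_exp_neg_mul_atTop_nhds_zero n (-r) (neg_pos.2 hr)

theorem tendsto_quadExp_atTop (p₀ p₁ p₂ : ℝ) {r : ℝ} (hr : r < 0) :
    Tendsto (quadExp p₀ p₁ p₂ r) atTop (𝓝 0) := by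
  have h := (((tendsto_pow_mul_exp_mul_atTop_nhds_zero 0 hr).const_mul p₀).add
    ((tendsto_pow_mul_exp_mul_atTop_nhds_zero 1 hr).const_mul p₁)).add
    ((tendsto_pow_mul_exp_mul_atTop_nhds_zero 2 hr).const_mul p₂)
  simp only [mul_zero, add_zero] at h
  refine h.congr fun t => ?_
  simp only [quadExp]; ring

theorem deriv_comp_div_const {𝕜 : Type*} [NontriviallyNormedField 𝕜] (F : 𝕜 → 𝕜) (c : 𝕜) :
    deriv (fun y => F (y / c)) = fun y => deriv F (y / c) / c := by
  funext y
  simpa [div_eq_inv_mul, mul_comm] using deriv_comp_mul_left c⁻¹ F y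

theorem deriv_deriv_comp_div_const {𝕜 : Type*} [NontriviallyNormedField 𝕜] (F : 𝕜 → 𝕜) (c : 𝕜) :
    deriv (deriv fun y => F (y / c)) = fun y => deriv (deriv F) (y / c) / c ^ 2 := by
  rw [deriv_comp_div_const]
  funext y
  rw [deriv_div_const, deriv_comp_div_const]
  ring

theorem deriv_quadExp_sub_quadExp (p₀ p₁ p₂ r q₀ q₁ q₂ s : ℝ) :
    deriv (quadExp p₀ p₁ p₂ r - quadExp q₀ q₁ q₂ s) =
      quadExp (p₁ + r * p₀) (2 * p₂ + r * p₁) (r * p₂) r -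
        quadExp (q₁ + s * q₀) (2 * q₂ + s * q₁) (s * q₂) s :=
  funext fun t => ((hasDerivAt_quadExp p₀ p₁ p₂ r t).sub (hasDerivAt_quadExp q₀ q₁ q₂ s t)).deriv

/-- The profile `φ` in the fast variable `t = y / ε`. -/
def correctorProfile (a c σ₁ σ₂ σ₃ σ₄ : ℝ) : ℝ → ℝ :=
  quadExp (σ₃ / (2 * a ^ 2) + 3 * σ₄ / (4 * a ^ 3) - c) (σ₁ / a + σ₂ / a ^ 2) (σ₂ / (2 * a)) (-a) -
    quadExp (σ₃ / (2 * a ^ 2) + 3 * σ₄ / (4 * a ^ 3)) (σ₄ / (2 * a ^ 2)) 0 (-(2 * a))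

section
variable {a : ℝ} (c σ₁ σ₂ σ₃ σ₄ : ℝ)

theorem correctorProfile_ode (ha : a ≠ 0) (t : ℝ) :
    -deriv (deriv (correctorProfile a c σ₁ σ₂ σ₃ σ₄)) t -
        a * deriv (correctorProfile a c σ₁ σ₂ σ₃ σ₄) t =
      σ₁ * exp (-a * t) + σ₂ * t * exp (-a * t) +
        σ₃ * exp (-(2 * a) * t) + σ₄ * t * exp (-(2 * a) * t) := by
  simp only [correctorProfile, deriv_quadExp_sub_quadExp, Pi.sub_apply, quadExp]
  field_simp
  ring

theorem correctorProfile_zero : correctorProfile a c σ₁ σ₂ σ₃ σ₄ 0 = -c := by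
  simp [correctorProfile, quadExp]

theorem tendsto_correctorProfile_atTop (ha : 0 < a) :
    Tendsto (correctorProfile a c σ₁ σ₂ σ₃ σ₄) atTop (𝓝 0) := by
  rw [← sub_zero (0 : ℝ)]
  exact (tendsto_quadExp_atTop _ _ _ (neg_lt_zero.2 ha)).sub
    (tendsto_quadExp_atTop _ _ _ (neg_lt_zero.2 (mul_pos two_pos ha)))

end

end

/-- The explicit tangential component of the first-order boundary-layer corrector:
`φ` as defined below satisfies (i) the higher-order Prandtl equation
`-ε φ'' - a φ' = (1/ε)(σ₁ e^{-ay/ε} + σ₂ (y/ε) e^{-ay/ε} + σ₃ e^{-2ay/ε} + σ₄ (y/ε) e^{-2ay/ε})`,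
(ii) `φ(0) = -c`, and (iii) `φ(y) → 0` as `y → ∞`. -/
theorem first_order_corrector_profile (a ε c σ₁ σ₂ σ₃ σ₄ : ℝ) (ha : 0 < a) (hε : 0 < ε) :
    (∀ y : ℝ,
      -ε * deriv (deriv (fun y : ℝ =>
          (σ₃ / (2 * a ^ 2) + 3 * σ₄ / (4 * a ^ 3) - c) * Real.exp (-(a * y) / ε) +
          ((σ₁ / a + σ₂ / a ^ 2) * (y / ε) + (σ₂ / (2 * a)) * (y / ε) ^ 2) *
            Real.exp (-(a * y) / ε) -
          ((σ₃ / (2 * a ^ 2) + 3 * σ₄ / (4 * a ^ 3)) + (σ₄ / (2 * a ^ 2)) * (y / ε)) *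
            Real.exp (-(2 * a * y) / ε))) y -
        a * deriv (fun y : ℝ =>
          (σ₃ / (2 * a ^ 2) + 3 * σ₄ / (4 * a ^ 3) - c) * Real.exp (-(a * y) / ε) +
          ((σ₁ / a + σ₂ / a ^ 2) * (y / ε) + (σ₂ / (2 * a)) * (y / ε) ^ 2) *
            Real.exp (-(a * y) / ε) -
          ((σ₃ / (2 * a ^ 2) + 3 * σ₄ / (4 * a ^ 3)) + (σ₄ / (2 * a ^ 2)) * (y / ε)) *
            Real.exp (-(2 * a * y) / ε)) y =
      (1 / ε) * (σ₁ * Real.exp (-(a * y) / ε) + σ₂ * (y / ε) * Real.exp (-(a * y) / ε) +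
        σ₃ * Real.exp (-(2 * a * y) / ε) + σ₄ * (y / ε) * Real.exp (-(2 * a * y) / ε))) ∧
    ((fun y : ℝ =>
        (σ₃ / (2 * a ^ 2) + 3 * σ₄ / (4 * a ^ 3) - c) * Real.exp (-(a * y) / ε) +
        ((σ₁ / a + σ₂ / a ^ 2) * (y / ε) + (σ₂ / (2 * a)) * (y / ε) ^ 2) *
          Real.exp (-(a * y) / ε) -
        ((σ₃ / (2 * a ^ 2) + 3 * σ₄ / (4 * a ^ 3)) + (σ₄ / (2 * a ^ 2)) * (y / ε)) *
          Real.exp (-(2 * a * y) / ε)) 0 = -c) ∧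
    Filter.Tendsto (fun y : ℝ =>
        (σ₃ / (2 * a ^ 2) + 3 * σ₄ / (4 * a ^ 3) - c) * Real.exp (-(a * y) / ε) +
        ((σ₁ / a + σ₂ / a ^ 2) * (y / ε) + (σ₂ / (2 * a)) * (y / ε) ^ 2) *
          Real.exp (-(a * y) / ε) -
        ((σ₃ / (2 * a ^ 2) + 3 * σ₄ / (4 * a ^ 3)) + (σ₄ / (2 * a ^ 2)) * (y / ε)) *
          Real.exp (-(2 * a * y) / ε))
      Filter.atTop (nhds 0) := by
  have hφ : (fun y : ℝ =>
        (σ₃ / (2 * a ^ 2) + 3 * σ₄ / (4 * a ^ 3) - c) * Real.exp (-(a * y) / ε) +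
        ((σ₁ / a + σ₂ / a ^ 2) * (y / ε) + (σ₂ / (2 * a)) * (y / ε) ^ 2) *
          Real.exp (-(a * y) / ε) -
        ((σ₃ / (2 * a ^ 2) + 3 * σ₄ / (4 * a ^ 3)) + (σ₄ / (2 * a ^ 2)) * (y / ε)) *
          Real.exp (-(2 * a * y) / ε)) = fun y => correctorProfile a c σ₁ σ₂ σ₃ σ₄ (y / ε) := by
    funext y
    simp only [correctorProfile, Pi.sub_apply, quadExp]
    ring_nf
  refine ⟨fun y => ?_, ?_, ?_⟩ <;> rw [hφ]
  · rw [deriv_deriv_comp_div_const, deriv_comp_div_const,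
      show -(a * y) / ε = -a * (y / ε) by ring, show -(2 * a * y) / ε = -(2 * a) * (y / ε) by ring,
      ← correctorProfile_ode c σ₁ σ₂ σ₃ σ₄ ha.ne']
    field_simp
  · simpa using correctorProfile_zero c σ₁ σ₂ σ₃ σ₄
  · exact (tendsto_correctorProfile_atTop c σ₁ σ₂ σ₃ σ₄ ha).comp (tendsto_id.atTop_div_const hε)
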